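/- Let k be a positive integer. If G is a finite simple graph of order n and size m with minimum degree δ(G) ≥ k − 1, then the k-tuple domination number satisfies γ_{×k}(G) ≥ (2kn − 2m)/(k + 1). -/

import Mathlib

open Finset

/-- A set `S` of vertices is a `(k,k',k'')`-dominating set if every vertex in `S` has at
least `k` neighbors in `S`, and every vertex not in `S` has at least `k'` neighbors in `S`
and at least `k''` neighbors outside `S`. -/
def SimpleGraph.IsKkkDomSet {V : Type*} [Fintype V] [DecidableEq V] (G : SimpleGraph V)
    [DecidableRel G.Adj] (k k' k'' : ℕ) (S : Finset V) : Prop :=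
  (∀ v ∈ S, k ≤ (G.neighborFinset v ∩ S).card) ∧
  (∀ v ∉ S, k' ≤ (G.neighborFinset v ∩ S).card ∧ k'' ≤ (G.neighborFinset v \ S).card)

/-- The `(k,k',k'')`-domination number: the minimum cardinality of a
`(k,k',k'')`-dominating set. -/
noncomputable def SimpleGraph.kkkDomNum {V : Type*} [Fintype V] [DecidableEq V]
    (G : SimpleGraph V) [DecidableRel G.Adj] (k k' k'' : ℕ) : ℕ :=
  sInf {n | ∃ S : Finset V, G.IsKkkDomSet k k' k'' S ∧ S.card = n}

/-! Counting the edge ends at `S` gives `2m ≥ Σ_{v ∈ S} |N(v) ∩ S| + 2 e(S, Sᶜ)`. For a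
`(k-1,k,0)`-dominating set the first sum is at least `(k-1)|S|` and `e(S, Sᶜ) ≥ k (n - |S|)`,
so `2m ≥ (k-1)|S| + 2k(n - |S|)`, which rearranges to `(k+1)|S| ≥ 2kn - 2m`. The minimum
degree condition makes the whole vertex set dominating, so the infimum defining `γ_{×k}` is
attained rather than the junk value `sInf ∅ = 0`. -/

namespace SimpleGraph

variable {V : Type*} [Fintype V] [DecidableEq V] (G : SimpleGraph V) [DecidableRel G.Adj]

theorem sum_card_neighborFinset_inter_comm (s t : Finset V) :
    ∑ v ∈ s, #(G.neighborFinset v ∩ t) = ∑ v ∈ t, #(G.neighborFinset v ∩ s) := by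
  have above (v : V) : t.bipartiteAbove G.Adj v = G.neighborFinset v ∩ t := by
    ext; simp [bipartiteAbove, and_comm]
  have below (u : V) : s.bipartiteBelow G.Adj u = G.neighborFinset u ∩ s := by
    ext; simp [bipartiteBelow, G.adj_comm, and_comm]
  simpa only [above, below] using
    sum_card_bipartiteAbove_eq_sum_card_bipartiteBelow (s := s) (t := t) G.Adj

theorem mul_card_add_two_mul_mul_card_compl_le (S : Finset V) {a b : ℕ}
    (hS : ∀ v ∈ S, a ≤ #(G.neighborFinset v ∩ S))
    (hSc : ∀ v ∉ S, b ≤ #(G.neighborFinset v ∩ S)) :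
    a * #S + 2 * (b * #Sᶜ) ≤ 2 * #G.edgeFinset := by
  have hin : a * #S ≤ ∑ v ∈ S, #(G.neighborFinset v ∩ S) := by
    simpa [mul_comm] using card_nsmul_le_sum S _ a hS
  have hcross : b * #Sᶜ ≤ ∑ v ∈ Sᶜ, #(G.neighborFinset v ∩ S) := by
    simpa [mul_comm] using card_nsmul_le_sum Sᶜ _ b fun v hv => hSc v (mem_compl.1 hv)
  have hdeg (v : V) : G.degree v = #(G.neighborFinset v ∩ S) + #(G.neighborFinset v ∩ Sᶜ) := by
    rw [← card_neighborFinset_eq_degree, ← sdiff_eq_inter_compl, card_inter_add_card_sdiff]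
  have hinside : ∑ v ∈ S, G.degree v
      = ∑ v ∈ S, #(G.neighborFinset v ∩ S) + ∑ v ∈ Sᶜ, #(G.neighborFinset v ∩ S) := by
    rw [← G.sum_card_neighborFinset_inter_comm S Sᶜ, ← sum_add_distrib]
    exact sum_congr rfl fun v _ => hdeg v
  have houtside : ∑ v ∈ Sᶜ, #(G.neighborFinset v ∩ S) ≤ ∑ v ∈ Sᶜ, G.degree v :=
    sum_le_sum fun v _ => by rw [hdeg]; exact Nat.le_add_right _ _
  calc a * #S + 2 * (b * #Sᶜ) ≤ ∑ v ∈ S, G.degree v + ∑ v ∈ Sᶜ, G.degree v := by omega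
    _ = 2 * #G.edgeFinset := by
        rw [sum_add_sum_compl, sum_degrees_eq_twice_card_edges]

theorem IsKkkDomSet.two_mul_mul_card_le {k : ℕ} {S : Finset V}
    (hS : G.IsKkkDomSet (k - 1) k 0 S) :
    2 * k * Fintype.card V ≤ 2 * #G.edgeFinset + (k + 1) * #S := by
  have hedges := G.mul_card_add_two_mul_mul_card_compl_le S hS.1 fun v hv => (hS.2 v hv).1
  have hS2k : 2 * k * #S ≤ (k - 1) * #S + (k + 1) * #S := by
    rw [← add_mul]; exact Nat.mul_le_mul_right _ (by omega)
  rw [← card_add_card_compl S]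
  linarith

theorem isKkkDomSet_univ {k k' k'' : ℕ} (hδ : ∀ v, k ≤ G.degree v) :
    G.IsKkkDomSet k k' k'' univ :=
  And.intro (fun v _ => by simpa using hδ v) fun v hv => absurd (mem_univ v) hv

theorem exists_isKkkDomSet_card_eq_kkkDomNum {k k' k'' : ℕ} {T : Finset V}
    (hT : G.IsKkkDomSet k k' k'' T) :
    ∃ S, G.IsKkkDomSet k k' k'' S ∧ #S = G.kkkDomNum k k' k'' :=
  Nat.sInf_mem (s := {n | ∃ S, G.IsKkkDomSet k k' k'' S ∧ #S = n}) ⟨_, T, hT, rfl⟩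

end SimpleGraph

theorem stmt_19_general {V : Type*} [Fintype V] [DecidableEq V] (G : SimpleGraph V)
    [DecidableRel G.Adj] (k : ℕ)
    (hδ : ∀ v : V, k - 1 ≤ G.degree v) :
    (2 * (k : ℝ) * Fintype.card V - 2 * G.edgeFinset.card) / ((k : ℝ) + 1)
      ≤ G.kkkDomNum (k - 1) k 0 := by
  obtain ⟨S, hS, hScard⟩ :=
    G.exists_isKkkDomSet_card_eq_kkkDomNum (G.isKkkDomSet_univ (k' := k) (k'' := 0) hδ)
  have key : (2 * k * Fintype.card V : ℝ) ≤ 2 * #G.edgeFinset + (k + 1) * #S :=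
    mod_cast hS.two_mul_mul_card_le
  rw [div_le_iff₀ (by positivity), ← hScard]
  linarith

/-- If k ≥ 1 and δ(G) ≥ k − 1, then γ_{×k}(G) = γ_{(k-1,k,0)}(G) ≥ (2kn − 2m)/(k + 1). -/
theorem stmt_19 {V : Type*} [Fintype V] [DecidableEq V] (G : SimpleGraph V)
    [DecidableRel G.Adj] (k : ℕ) (hk : 1 ≤ k)
    (hδ : ∀ v : V, k - 1 ≤ G.degree v) :
    (2 * (k : ℝ) * Fintype.card V - 2 * G.edgeFinset.card) / ((k : ℝ) + 1)
      ≤ G.kkkDomNum (k - 1) k 0 :=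
  stmt_19_general G k hδ
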